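/- The set SO(N; ℚ) of rotations R ∈ SO(N) such that R e_i ∈ ℚ^N for every i = 1, …, N is dense in SO(N) (with respect to the operator or Euclidean matrix norm). -/

import Mathlib

/-!
By the Cartan–Dieudonné theorem every orthogonal matrix is a product of Householder reflections
`1 - 2 v vᵀ / (vᵀ v)`. A reflection depends continuously on `v ≠ 0` and has rational entries when
`v` does, so approximating each `v` by a rational vector shows that `O(N; ℚ)` is dense in `O(N)`.
Orthogonal matrices close to a rotation have positive determinant, hence determinant `1`.
-/

open Matrix

namespace Matrix

variable {n : Type*} [Fintype n] [DecidableEq n]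

/-- Since `2 / 0 = 0`, `householder 0 = 1`. -/
noncomputable def householder {K : Type*} [Field K] (v : n → K) : Matrix n n K :=
  1 - (2 / (v ⬝ᵥ v)) • vecMulVec v v

theorem householder_mem_orthogonalGroup {K : Type*} [Field K] (v : n → K) :
    householder v ∈ orthogonalGroup n K := by
  rw [mem_orthogonalGroup_iff']
  set c := 2 / (v ⬝ᵥ v)
  have hc : c * c * (v ⬝ᵥ v) = 2 * c := by
    by_cases hv : v ⬝ᵥ v = 0
    · simp [c, hv]
    · simp only [c]; field_simp
  have hP : vecMulVec v v * vecMulVec v v = (v ⬝ᵥ v) • vecMulVec v v := by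
    rw [vecMulVec_mul_vecMulVec, vecMulVec_smul]
  rw [householder, transpose_sub, transpose_one, transpose_smul, transpose_vecMulVec]
  calc (1 - c • vecMulVec v v) * (1 - c • vecMulVec v v)
      = 1 - (2 * c - c * c * (v ⬝ᵥ v)) • vecMulVec v v := by
        simp only [sub_mul, mul_sub, one_mul, mul_one, smul_mul_smul_comm, hP, smul_smul]
        module
    _ = 1 := by rw [hc, sub_self, zero_smul, sub_zero]

theorem _root_.RingHom.mapMatrix_householder {K L : Type*} [Field K] [Field L] (f : K →+* L)
    (v : n → K) : f.mapMatrix (householder v) = householder (f ∘ v) := by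
  ext i j
  simp [householder, vecMulVec_apply, one_apply, dotProduct, map_sum, map_ofNat]

theorem continuousAt_householder {K : Type*} [Field K] [TopologicalSpace K]
    [IsTopologicalDivisionRing K] {v : n → K} (hv : v ⬝ᵥ v ≠ 0) :
    ContinuousAt householder v := by
  unfold householder
  fun_prop (disch := exact hv)

theorem toEuclideanCLM_householder (v : EuclideanSpace ℝ n) :
    toEuclideanCLM (𝕜 := ℝ) (householder v.ofLp) = (ℝ ∙ v)ᗮ.reflection := by
  ext x i
  change _ = ((ℝ ∙ v)ᗮ.reflection x).ofLp i
  rw [Submodule.reflection_orthogonal_apply, Submodule.reflection_singleton_apply,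
    RCLike.ofReal_real_eq_id, id, EuclideanSpace.real_norm_sq_eq, real_inner_comm]
  simp only [ofLp_toEuclideanCLM, householder, sub_mulVec, one_mulVec, smul_mulVec, vecMulVec_mulVec,
    PiLp.sub_apply, PiLp.neg_apply, PiLp.smul_apply, PiLp.inner_apply, Pi.sub_apply, Pi.smul_apply,
    dotProduct, RCLike.inner_apply, conj_trivial, smul_eq_mul, MulOpposite.smul_eq_mul_unop,
    MulOpposite.unop_op, nsmul_eq_mul, Nat.cast_ofNat, sq]
  ring

theorem exists_list_prod_householder_eq {S : Matrix n n ℝ} (hS : S ∈ orthogonalGroup n ℝ) :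
    ∃ l : List (n → ℝ), (l.map householder).prod = S := by
  let u : unitary (EuclideanSpace ℝ n →L[ℝ] EuclideanSpace ℝ n) :=
    ⟨toEuclideanCLM (𝕜 := ℝ) S, Unitary.map_mem _ hS⟩
  obtain ⟨l, -, hl⟩ := (Unitary.linearIsometryEquiv u).reflections_generate_dim
  refine ⟨l.map WithLp.ofLp, EquivLike.injective (toEuclideanCLM (𝕜 := ℝ) (n := n)) ?_⟩
  have hu : toEuclideanCLM (𝕜 := ℝ) S = (Unitary.linearIsometryEquiv.symm
      (Unitary.linearIsometryEquiv u) : EuclideanSpace ℝ n →L[ℝ] EuclideanSpace ℝ n) := by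
    simp [u]
  rw [hu, hl, map_list_prod, map_list_prod, Submonoid.coe_list_prod]
  simp only [List.map_map]
  congr 1
  exact List.map_congr_left fun v _ => by simp [toEuclideanCLM_householder]

variable (n) in
noncomputable def rationalOrthogonalGroup : Submonoid (Matrix n n ℝ) :=
  (orthogonalGroup n ℚ).map (Rat.castHom ℝ).mapMatrix

theorem householder_mem_closure_rationalOrthogonalGroup (v : n → ℝ) :
    householder v ∈ closure (rationalOrthogonalGroup n : Set (Matrix n n ℝ)) := by
  by_cases hv : v = 0
  · simpa [hv, householder] using subset_closure (one_mem (rationalOrthogonalGroup n))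
  have hdense : DenseRange (fun q : n → ℚ => ((↑) : ℚ → ℝ) ∘ q) :=
    DenseRange.piMap fun _ => Rat.denseRange_cast
  refine closure_mono ?_ <|
    ((continuousAt_householder (dotProduct_self_eq_zero.not.mpr hv)).continuousWithinAt
      ).mem_closure_image (hdense v)
  rintro _ ⟨_, ⟨q, rfl⟩, rfl⟩
  exact ⟨householder q, householder_mem_orthogonalGroup q, RingHom.mapMatrix_householder _ q⟩

theorem orthogonalGroup_subset_closure_rationalOrthogonalGroup :
    (orthogonalGroup n ℝ : Set (Matrix n n ℝ)) ⊆ closure (rationalOrthogonalGroup n) := by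
  intro S hS
  obtain ⟨l, rfl⟩ := exists_list_prod_householder_eq hS
  rw [← Submonoid.coe_topologicalClosure]
  refine Submonoid.list_prod_mem _ fun R hR => ?_
  obtain ⟨v, -, rfl⟩ := List.mem_map.mp hR
  exact householder_mem_closure_rationalOrthogonalGroup v

theorem map_orthogonalGroup_le {K L : Type*} [CommRing K] [CommRing L] (f : K →+* L) :
    (orthogonalGroup n K).map f.mapMatrix ≤ orthogonalGroup n L := by
  rintro _ ⟨Q, hQ, rfl⟩
  rw [SetLike.mem_coe, mem_orthogonalGroup_iff'] at hQ
  rw [mem_orthogonalGroup_iff', RingHom.mapMatrix_apply, ← transpose_map, ← Matrix.map_mul, hQ,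
    Matrix.map_one _ f.map_zero f.map_one]

theorem det_eq_one_of_mem_orthogonalGroup_of_pos {K : Type*} [CommRing K] [LinearOrder K]
    [IsStrictOrderedRing K] {R : Matrix n n K} (hR : R ∈ orthogonalGroup n K) (hpos : 0 < R.det) :
    R.det = 1 := by
  have hsq := congrArg det ((mem_orthogonalGroup_iff' _ _).mp hR)
  rw [det_mul, det_transpose, det_one] at hsq
  nlinarith

theorem specialOrthogonalGroup_subset_closure_inf_rationalOrthogonalGroup :
    (specialOrthogonalGroup n ℝ : Set (Matrix n n ℝ)) ⊆
      closure (specialOrthogonalGroup n ℝ ⊓ rationalOrthogonalGroup n : Submonoid _) := by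
  intro S hS
  obtain ⟨hSO, hdet⟩ := mem_specialOrthogonalGroup_iff.mp hS
  have hpos : IsOpen {R : Matrix n n ℝ | 0 < R.det} :=
    isOpen_lt continuous_const continuous_id.matrix_det
  refine closure_mono ?_ <| hpos.inter_closure
    ⟨show 0 < S.det from hdet ▸ one_pos, orthogonalGroup_subset_closure_rationalOrthogonalGroup hSO⟩
  rintro R ⟨hRpos, hR⟩
  have hRO := map_orthogonalGroup_le _ hR
  exact ⟨⟨hRO, det_eq_one_of_mem_orthogonalGroup_of_pos hRO hRpos⟩, hR⟩

end Matrix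

/-- The rational rotations `SO(N; ℚ)` are dense in `SO(N)`
(with respect to the Euclidean (Frobenius) matrix norm). -/
theorem rational_rotations_dense (N : ℕ) (S : Matrix (Fin N) (Fin N) ℝ)
    (hS : S.transpose * S = 1) (hdet : S.det = 1)
    (ε : ℝ) (hε : 0 < ε) :
    ∃ R : Matrix (Fin N) (Fin N) ℝ,
      R.transpose * R = 1 ∧ R.det = 1 ∧ (∀ i j, ∃ q : ℚ, R i j = q) ∧
      Real.sqrt (∑ i, ∑ j, (R i j - S i j) ^ 2) < ε := by
  have hSO : S ∈ specialOrthogonalGroup (Fin N) ℝ :=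
    mem_specialOrthogonalGroup_iff.mpr ⟨(mem_orthogonalGroup_iff' _ _).mpr hS, hdet⟩
  have hball : IsOpen
      {R : Matrix (Fin N) (Fin N) ℝ | Real.sqrt (∑ i, ∑ j, (R i j - S i j) ^ 2) < ε} :=
    isOpen_lt (by fun_prop) continuous_const
  obtain ⟨R, hRS, hRSO, Q, -, rfl⟩ := mem_closure_iff.mp
    (specialOrthogonalGroup_subset_closure_inf_rationalOrthogonalGroup hSO) _ hball
    (by simpa using hε)
  exact ⟨_, (mem_orthogonalGroup_iff' _ _).mp hRSO.1, hRSO.2, fun i j => ⟨Q i j, rfl⟩, hRS⟩
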